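/- Let Δ be a PR complex and suppose σ_1, σ_2 are faces of Δ with H̃_{i_1}(link_Δ σ_1) ≠ 0 and H̃_{i_2}(link_Δ σ_2) ≠ 0 being the unique nontrivial homologies of their links. If |σ_1| < |σ_2| then i_1 > i_2. -/

import Mathlib

open Finset
open scoped Classical

/-- An abstract simplicial complex: a collection of finite subsets of the
vertex type `V` closed under taking subsets. -/
def IsComplex {V : Type} (K : Set (Finset V)) : Prop :=
  ∀ s ∈ K, ∀ t ⊆ s, t ∈ K

/-- The link of a face `σ` in `K`: all faces `τ` disjoint from `σ` with `σ ∪ τ ∈ K`. -/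
def link {V : Type} [DecidableEq V] (K : Set (Finset V)) (σ : Finset V) : Set (Finset V) :=
  {τ | Disjoint σ τ ∧ σ ∪ τ ∈ K}

theorem link_isComplex {V : Type} [DecidableEq V] {K : Set (Finset V)} (hK : IsComplex K)
    (σ : Finset V) : IsComplex (link K σ) := by
  intro s hs t ht
  exact ⟨hs.1.mono_right ht, hK _ hs.2 _ (Finset.union_subset_union_right ht)⟩

/-- The incidence sign of a vertex `x` with respect to a face `σ`, relative to a fixed
(arbitrary) well-ordering of the vertices. -/
noncomputable def bdrySign {V : Type} (σ : Finset V) (x : V) : ℤ :=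
  (-1 : ℤ) ^ (σ.filter (fun y => WellOrderingRel y x)).card

/-- The total (reduced) simplicial chain module of `K` with coefficients in `𝕜`:
functions from the faces of `K` (including the empty face) to `𝕜`. -/
abbrev TotalChains (𝕜 : Type) [Field 𝕜] {V : Type} (K : Set (Finset V)) : Type :=
  {s : Finset V // s ∈ K} → 𝕜

/-- The simplicial boundary operator on the total chain module, written in terms of
cofaces: `(∂c)(τ) = Σ_{x ∉ τ, τ ∪ {x} ∈ K} ± c(τ ∪ {x})`. -/
noncomputable def bdryMap (𝕜 : Type) [Field 𝕜] {V : Type} [DecidableEq V] [Fintype V]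
    (K : Set (Finset V)) : TotalChains 𝕜 K →ₗ[𝕜] TotalChains 𝕜 K where
  toFun c := fun τ => ∑ x ∈ τ.1ᶜ,
    if h : insert x τ.1 ∈ K then bdrySign τ.1 x • c ⟨insert x τ.1, h⟩ else 0
  map_add' c d := by
    funext τ
    rw [Pi.add_apply, ← Finset.sum_add_distrib]
    refine Finset.sum_congr rfl fun x _ => ?_
    split
    · rw [Pi.add_apply, smul_add]
    · rw [add_zero]
  map_smul' a c := by
    funext τ
    rw [RingHom.id_apply, Pi.smul_apply, Finset.smul_sum]
    refine Finset.sum_congr rfl fun x _ => ?_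
    split
    · rw [Pi.smul_apply, smul_comm]
    · rw [smul_zero]

/-- The submodule of chains supported on faces of cardinality `i + 1`
(the chains of homological degree `i`). -/
def degChains (𝕜 : Type) [Field 𝕜] {V : Type} (K : Set (Finset V)) (i : ℤ) :
    Submodule 𝕜 (TotalChains 𝕜 K) where
  carrier := {c | ∀ τ : {s : Finset V // s ∈ K}, (τ.1.card : ℤ) ≠ i + 1 → c τ = 0}
  add_mem' := by
    intro a b ha hb τ hτ
    rw [Pi.add_apply, ha τ hτ, hb τ hτ, add_zero]
  zero_mem' := fun τ _ => rfl
  smul_mem' := by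
    intro a c hc τ hτ
    rw [Pi.smul_apply, hc τ hτ, smul_zero]

/-- The `i`-th reduced simplicial homology of the complex `K` over the field `𝕜`:
degree-`i` cycles modulo boundaries of degree-`(i+1)` chains. -/
noncomputable abbrev redHomology (𝕜 : Type) [Field 𝕜] {V : Type} [DecidableEq V] [Fintype V]
    (K : Set (Finset V)) (i : ℤ) : Type :=
  ↥(degChains 𝕜 K i ⊓ LinearMap.ker (bdryMap 𝕜 K)) ⧸
    Submodule.comap (degChains 𝕜 K i ⊓ LinearMap.ker (bdryMap 𝕜 K)).subtype
      (Submodule.map (bdryMap 𝕜 K) (degChains 𝕜 K (i + 1)))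

/-- A simplicial complex is PR (over `𝕜`) if no two faces of different cardinalities
have links with nontrivial reduced homology in the same degree. -/
def IsPR (𝕜 : Type) [Field 𝕜] {V : Type} [DecidableEq V] [Fintype V]
    (K : Set (Finset V)) : Prop :=
  ∀ i : ℤ, -1 ≤ i → ∀ σ ∈ K, ∀ τ ∈ K,
    Nontrivial (redHomology 𝕜 (link K σ) i) → Nontrivial (redHomology 𝕜 (link K τ) i) →
      σ.card = τ.card

/-!
The heart of the matter is the descending-chain lemma: if `H̃_{j+1}(lk σ) ≠ 0` with `j ≥ -1`,
then `H̃_j(lk τ) ≠ 0` for some face `τ ⊋ σ`. Both halves of its proof run on the Mayer–Vietoris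
sequence `H̃_{j+1}(A ∖ v) → H̃_{j+1}(A) → H̃_j(lk_A v) → H̃_j(A ∖ v) → H̃_j(A)`, realised on chains
by coning over `v`. Deleting the vertices of `lk σ` one at a time, a nonzero class must at some
point fail to survive in the deletion, since the complex ends up as `{∅}`; at that moment
`H̃_j(lk_A v) ≠ 0`, where `lk_A v` is an induced subcomplex of `lk (σ ∪ v)`. Conversely, a
nonvanishing `H̃_j` of an induced subcomplex of `lk ρ` survives adding a vertex `u` back, or is
passed on to an induced subcomplex of `lk (ρ ∪ u)`; this ends at a full link of a face
containing `σ ∪ v`.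

If `i₂ ≥ i₁`, applying the lemma `i₂ - i₁` times from `σ₂` gives a face of size at least
`|σ₂| > |σ₁|` whose link has homology in degree `i₁`, contradicting the PR property.
-/

section Signs

variable {V : Type}

lemma bdrySign_mul_self (σ : Finset V) (x : V) : bdrySign σ x * bdrySign σ x = 1 := by
  rw [bdrySign, ← pow_add, ← two_mul, pow_mul, neg_one_sq, one_pow]

variable [DecidableEq V]

lemma bdrySign_insert {a : V} {σ : Finset V} (ha : a ∉ σ) (x : V) :
    bdrySign (insert a σ) x = (if WellOrderingRel a x then -1 else 1) * bdrySign σ x := by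
  unfold bdrySign
  rw [Finset.filter_insert]
  split
  · rw [Finset.card_insert_of_notMem (fun h => ha (Finset.mem_filter.mp h).1), pow_succ, mul_comm]
  · rw [one_mul]

lemma bdrySign_mul_bdrySign_insert_comm {G : Finset V} {x v : V} (hx : x ∉ G) (hv : v ∉ G)
    (hxv : x ≠ v) :
    bdrySign G x * bdrySign (insert x G) v = -(bdrySign G v * bdrySign (insert v G) x) := by
  rw [bdrySign_insert hx v, bdrySign_insert hv x]
  rcases trichotomous_of (@WellOrderingRel V) x v with h | h | h
  · rw [if_pos h, if_neg (asymm h)]; ring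
  · exact absurd h hxv
  · rw [if_neg (asymm h), if_pos h]; ring

end Signs

lemma Finset.sum_sum_eq_zero_of_swap {α β : Type} [AddCommGroup β] (s : Finset α)
    (t : α → Finset α) (F : α → α → β) (hsymm : ∀ x ∈ s, ∀ y ∈ t x, y ∈ s ∧ x ∈ t y)
    (hne : ∀ x ∈ s, ∀ y ∈ t x, y ≠ x) (hanti : ∀ x ∈ s, ∀ y ∈ t x, F x y + F y x = 0) :
    ∑ x ∈ s, ∑ y ∈ t x, F x y = 0 := by
  rw [Finset.sum_sigma' s t F]
  refine Finset.sum_involution (fun p _ => ⟨p.2, p.1⟩) ?_ ?_ ?_ fun _ _ => rfl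
  · rintro ⟨x, y⟩ hp
    obtain ⟨hx, hy⟩ := Finset.mem_sigma.mp hp
    exact hanti x hx y hy
  · rintro ⟨x, y⟩ hp - h
    obtain ⟨hx, hy⟩ := Finset.mem_sigma.mp hp
    exact hne x hx y hy (congrArg Sigma.fst h)
  · rintro ⟨x, y⟩ hp
    obtain ⟨hx, hy⟩ := Finset.mem_sigma.mp hp
    exact Finset.mem_sigma.mpr (hsymm x hx y hy)

section Boundary

variable {𝕜 : Type} [Field 𝕜] {V : Type} [DecidableEq V] [Fintype V]

lemma bdryMap_apply {K : Set (Finset V)} (c : TotalChains 𝕜 K) (τ : {s : Finset V // s ∈ K}) :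
    bdryMap 𝕜 K c τ = ∑ x ∈ τ.1ᶜ,
      if h : insert x τ.1 ∈ K then bdrySign τ.1 x • c ⟨insert x τ.1, h⟩ else 0 := rfl

lemma bdryMap_bdryMap {K : Set (Finset V)} (hK : IsComplex K) (c : TotalChains 𝕜 K) :
    bdryMap 𝕜 K (bdryMap 𝕜 K c) = 0 := by
  funext τ
  set F : V → V → 𝕜 := fun x y =>
    if h : insert y (insert x τ.1) ∈ K then
      (bdrySign τ.1 x * bdrySign (insert x τ.1) y) • c ⟨insert y (insert x τ.1), h⟩
    else 0
  have hexpand : ∀ x ∈ τ.1ᶜ,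
      (if h : insert x τ.1 ∈ K then bdrySign τ.1 x • bdryMap 𝕜 K c ⟨insert x τ.1, h⟩ else 0)
        = ∑ y ∈ τ.1ᶜ.erase x, F x y := by
    intro x _
    by_cases hx : insert x τ.1 ∈ K
    · rw [dif_pos hx, bdryMap_apply, Finset.smul_sum, Finset.compl_insert]
      refine Finset.sum_congr rfl fun y _ => ?_
      simp only [F]
      split <;> simp only [smul_smul, smul_zero]
    · rw [dif_neg hx]
      refine (Finset.sum_eq_zero fun y _ => dif_neg fun h => hx ?_).symm
      exact hK _ h _ (Finset.subset_insert _ _)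
  rw [bdryMap_apply, Finset.sum_congr rfl hexpand, Pi.zero_apply]
  refine Finset.sum_sum_eq_zero_of_swap _ _ F (fun x hx y hy => ?_)
    (fun x _ y hy => (Finset.mem_erase.mp hy).1) (fun x hx y hy => ?_)
  · exact ⟨(Finset.mem_erase.mp hy).2, Finset.mem_erase.mpr ⟨(Finset.mem_erase.mp hy).1.symm, hx⟩⟩
  · obtain ⟨hyx, hy⟩ := Finset.mem_erase.mp hy
    simp only [F, Finset.insert_comm y x]
    split
    · rw [← add_smul, bdrySign_mul_bdrySign_insert_comm (Finset.mem_compl.mp hx)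
        (Finset.mem_compl.mp hy) hyx.symm, neg_add_cancel, zero_smul]
    · rw [add_zero]

lemma bdryMap_mem_degChains {K : Set (Finset V)} {c : TotalChains 𝕜 K} {j : ℤ}
    (hc : c ∈ degChains 𝕜 K (j + 1)) : bdryMap 𝕜 K c ∈ degChains 𝕜 K j := by
  intro τ hτ
  refine Finset.sum_eq_zero fun x hx => ?_
  split
  · rw [hc _ (by rw [Finset.card_insert_of_notMem (Finset.mem_compl.mp hx)]; push_cast; omega),
      smul_zero]
  · rfl

end Boundary

section Subcomplex

variable {𝕜 : Type} [Field 𝕜] {V : Type} {M A : Set (Finset V)}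

noncomputable def extendByZero (M A : Set (Finset V)) (c : TotalChains 𝕜 M) :
    TotalChains 𝕜 A :=
  fun τ => if h : τ.1 ∈ M then c ⟨τ.1, h⟩ else 0

lemma extendByZero_zero : extendByZero M A (0 : TotalChains 𝕜 M) = 0 := by
  funext τ
  unfold extendByZero
  split <;> rfl

def restrictChain (hMA : M ⊆ A) (y : TotalChains 𝕜 A) : TotalChains 𝕜 M :=
  fun τ => y ⟨τ.1, hMA τ.2⟩

lemma restrictChain_extendByZero (hMA : M ⊆ A) (c : TotalChains 𝕜 M) :
    restrictChain hMA (extendByZero M A c) = c := by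
  funext τ
  exact dif_pos τ.2

lemma extendByZero_restrictChain (hMA : M ⊆ A) {y : TotalChains 𝕜 A}
    (hy : ∀ τ : {s // s ∈ A}, τ.1 ∉ M → y τ = 0) :
    extendByZero M A (restrictChain hMA y) = y := by
  funext τ
  by_cases hτ : τ.1 ∈ M
  · exact dif_pos hτ
  · rw [extendByZero, dif_neg hτ, hy τ hτ]

lemma extendByZero_mem_degChains {c : TotalChains 𝕜 M} {j : ℤ} (hc : c ∈ degChains 𝕜 M j) :
    extendByZero M A c ∈ degChains 𝕜 A j := by
  intro τ hτ
  unfold extendByZero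
  split
  · exact hc _ hτ
  · rfl

lemma restrictChain_mem_degChains (hMA : M ⊆ A) {y : TotalChains 𝕜 A} {j : ℤ}
    (hy : y ∈ degChains 𝕜 A j) : restrictChain hMA y ∈ degChains 𝕜 M j :=
  fun _ hτ => hy _ hτ

variable [DecidableEq V] [Fintype V]

lemma bdryMap_extendByZero (hM : IsComplex M) (hMA : M ⊆ A) (c : TotalChains 𝕜 M) :
    bdryMap 𝕜 A (extendByZero M A c) = extendByZero M A (bdryMap 𝕜 M c) := by
  funext τ
  have hterm : ∀ x, (if h : insert x τ.1 ∈ A then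
        bdrySign τ.1 x • extendByZero M A c ⟨insert x τ.1, h⟩ else 0)
      = if h : insert x τ.1 ∈ M then bdrySign τ.1 x • c ⟨insert x τ.1, h⟩ else 0 := by
    intro x
    by_cases hM' : insert x τ.1 ∈ M
    · rw [dif_pos (hMA hM'), dif_pos hM', extendByZero, dif_pos hM']
    · rw [dif_neg hM']
      split
      · rw [extendByZero, dif_neg hM', smul_zero]
      · rfl
  rw [bdryMap_apply, Finset.sum_congr rfl fun x _ => hterm x, extendByZero]
  split
  · rfl
  · exact Finset.sum_eq_zero fun x _ =>
      dif_neg fun h => ‹τ.1 ∉ M› (hM _ h _ (Finset.subset_insert _ _))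

lemma bdryMap_restrictChain (hM : IsComplex M) (hMA : M ⊆ A) {y : TotalChains 𝕜 A}
    (hy : ∀ τ : {s // s ∈ A}, τ.1 ∉ M → y τ = 0) :
    bdryMap 𝕜 M (restrictChain hMA y) = restrictChain hMA (bdryMap 𝕜 A y) := by
  conv_rhs => rw [← extendByZero_restrictChain hMA hy, bdryMap_extendByZero hM hMA,
    restrictChain_extendByZero]

end Subcomplex

section Deletion

variable {V : Type}

def deletion (A : Set (Finset V)) (v : V) : Set (Finset V) :=
  {s | s ∈ A ∧ v ∉ s}

lemma deletion_subset (A : Set (Finset V)) (v : V) : deletion A v ⊆ A :=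
  fun _ hs => hs.1

lemma deletion_isComplex {A : Set (Finset V)} (hA : IsComplex A) (v : V) :
    IsComplex (deletion A v) :=
  fun _ hs t ht => ⟨hA _ hs.1 t ht, fun hv => hs.2 (ht hv)⟩

lemma notMem_deletion_iff {A : Set (Finset V)} {v : V} {τ : Finset V} (hτ : τ ∈ A) :
    τ ∉ deletion A v ↔ v ∈ τ := by
  rw [deletion, Set.mem_ofPred_eq, not_and, not_not, imp_iff_right hτ]

end Deletion

section Homology

variable {𝕜 : Type} [Field 𝕜] {V : Type} [DecidableEq V] [Fintype V] {M : Set (Finset V)}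
  {i : ℤ}

variable (𝕜) in
def HomologyVanishes (M : Set (Finset V)) (i : ℤ) : Prop :=
  ∀ z ∈ degChains 𝕜 M i, bdryMap 𝕜 M z = 0 → ∃ u ∈ degChains 𝕜 M (i + 1), bdryMap 𝕜 M u = z

lemma subsingleton_redHomology_iff :
    Subsingleton (redHomology 𝕜 M i) ↔ HomologyVanishes 𝕜 M i := by
  rw [Submodule.Quotient.subsingleton_iff, Submodule.eq_top_iff']
  constructor
  · intro h z hz hbz
    exact Submodule.mem_map.mp (h ⟨z, hz, hbz⟩)
  · rintro h ⟨z, hz, hbz⟩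
    exact Submodule.mem_map.mpr (h z hz hbz)

lemma nontrivial_redHomology_iff :
    Nontrivial (redHomology 𝕜 M i) ↔ ¬ HomologyVanishes 𝕜 M i := by
  rw [← subsingleton_redHomology_iff, not_subsingleton_iff_nontrivial]

lemma homologyVanishes_of_forall_card_ne (h : ∀ s ∈ M, (s.card : ℤ) ≠ i + 1) :
    HomologyVanishes 𝕜 M i := by
  intro z hz _
  refine ⟨0, Submodule.zero_mem _, ?_⟩
  funext τ
  rw [map_zero, Pi.zero_apply, hz τ (h _ τ.2)]

lemma exists_card_eq_of_not_homologyVanishes (h : ¬ HomologyVanishes 𝕜 M i) :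
    ∃ s ∈ M, (s.card : ℤ) = i + 1 := by
  contrapose! h
  exact homologyVanishes_of_forall_card_ne h

end Homology

section Link

variable {V : Type} [DecidableEq V] {A : Set (Finset V)} {v : V}

lemma mem_link_singleton {τ : Finset V} : τ ∈ link A {v} ↔ v ∉ τ ∧ insert v τ ∈ A := by
  rw [link, Set.mem_ofPred_eq, Finset.disjoint_singleton_left, Finset.insert_eq]

lemma erase_mem_link_singleton {τ : Finset V} (hτ : τ ∈ A) (hv : v ∈ τ) :
    τ.erase v ∈ link A {v} :=
  mem_link_singleton.mpr ⟨Finset.notMem_erase v τ, by rwa [Finset.insert_erase hv]⟩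

lemma insert_mem_link_singleton_iff {G : Finset V} (hG : G ∈ link A {v}) {x : V} (hx : x ≠ v) :
    insert x G ∈ link A {v} ↔ insert x (insert v G) ∈ A := by
  rw [mem_link_singleton, Finset.insert_comm, Finset.mem_insert, not_or,
    and_iff_right_of_imp fun _ => ⟨hx.symm, (mem_link_singleton.mp hG).1⟩]

lemma forall_of_forall_insert_mem_link {P : {s // s ∈ A} → Prop}
    (h : ∀ G (hG : G ∈ link A {v}), P ⟨insert v G, (mem_link_singleton.mp hG).2⟩) :
    ∀ τ : {s // s ∈ A}, v ∈ τ.1 → P τ := by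
  rintro ⟨τ, hτ⟩ hv
  convert h _ (erase_mem_link_singleton hτ hv)
  exact (Finset.insert_erase hv).symm

variable {𝕜 : Type} [Field 𝕜]

noncomputable def linkPart (A : Set (Finset V)) (v : V) (z : TotalChains 𝕜 A) :
    TotalChains 𝕜 (link A {v}) :=
  fun G => bdrySign G.1 v • z ⟨insert v G.1, (mem_link_singleton.mp G.2).2⟩

noncomputable def cone (A : Set (Finset V)) (v : V) (p : TotalChains 𝕜 (link A {v})) :
    TotalChains 𝕜 A :=
  fun τ => if h : v ∈ τ.1 then
    bdrySign (τ.1.erase v) v • p ⟨τ.1.erase v, erase_mem_link_singleton τ.2 h⟩ else 0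

lemma linkPart_cone (p : TotalChains 𝕜 (link A {v})) : linkPart A v (cone A v p) = p := by
  funext G
  have hvG := (mem_link_singleton.mp G.2).1
  simp only [linkPart, cone, Finset.mem_insert_self, dif_pos, Finset.erase_insert hvG, smul_smul,
    bdrySign_mul_self, one_smul]

lemma linkPart_mem_degChains {z : TotalChains 𝕜 A} {j : ℤ} (hz : z ∈ degChains 𝕜 A (j + 1)) :
    linkPart A v z ∈ degChains 𝕜 (link A {v}) j := by
  intro G hG
  have hcard : ((insert v G.1).card : ℤ) ≠ j + 1 + 1 := by
    rw [Finset.card_insert_of_notMem (mem_link_singleton.mp G.2).1]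
    push_cast
    omega
  rw [linkPart, hz _ hcard, smul_zero]

lemma cone_mem_degChains {p : TotalChains 𝕜 (link A {v})} {j : ℤ}
    (hp : p ∈ degChains 𝕜 (link A {v}) j) : cone A v p ∈ degChains 𝕜 A (j + 1) := by
  intro τ hτ
  unfold cone
  split
  · rw [hp _ (by rw [Finset.card_erase_of_mem ‹_›]; have := Finset.card_pos.mpr ⟨v, ‹_›⟩; omega),
      smul_zero]
  · rfl

variable [Fintype V]

lemma bdryMap_linkPart (z : TotalChains 𝕜 A) (G : {s // s ∈ link A {v}}) :
    bdryMap 𝕜 (link A {v}) (linkPart A v z) G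
      = -bdrySign G.1 v • bdryMap 𝕜 A z ⟨insert v G.1, (mem_link_singleton.mp G.2).2⟩ := by
  have hvG : v ∉ G.1 := (mem_link_singleton.mp G.2).1
  rw [bdryMap_apply, bdryMap_apply, Finset.smul_sum, Finset.compl_insert,
    ← Finset.add_sum_erase _ _ (Finset.mem_compl.mpr hvG),
    dif_neg fun h => (mem_link_singleton.mp h).1 (Finset.mem_insert_self v G.1), zero_add]
  refine Finset.sum_congr rfl fun x hx => ?_
  obtain ⟨hxv, hxG⟩ := Finset.mem_erase.mp hx
  by_cases hmem : insert x (insert v G.1) ∈ A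
  · have hlk := (insert_mem_link_singleton_iff G.2 hxv).mpr hmem
    rw [dif_pos hlk, dif_pos hmem, linkPart]
    simp only [Finset.insert_comm v x, smul_smul]
    rw [bdrySign_mul_bdrySign_insert_comm (Finset.mem_compl.mp hxG) hvG hxv, neg_mul]
  · rw [dif_neg fun h => hmem ((insert_mem_link_singleton_iff G.2 hxv).mp h), dif_neg hmem,
      smul_zero]

lemma bdryMap_cone_insert (p : TotalChains 𝕜 (link A {v})) (G : {s // s ∈ link A {v}}) :
    bdryMap 𝕜 A (cone A v p) ⟨insert v G.1, (mem_link_singleton.mp G.2).2⟩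
      = -bdrySign G.1 v • bdryMap 𝕜 (link A {v}) p G := by
  rw [← linkPart_cone p, bdryMap_linkPart, linkPart_cone, smul_smul, neg_mul_neg,
    bdrySign_mul_self, one_smul]

lemma add_bdryMap_cone_eq_zero {z : TotalChains 𝕜 A} {p : TotalChains 𝕜 (link A {v})}
    (hp : bdryMap 𝕜 (link A {v}) p = linkPart A v z) :
    ∀ τ : {s // s ∈ A}, v ∈ τ.1 → (z + bdryMap 𝕜 A (cone A v p)) τ = 0 :=
  forall_of_forall_insert_mem_link fun G hG => by
    rw [Pi.add_apply, bdryMap_cone_insert p ⟨G, hG⟩, hp, linkPart, smul_smul, neg_mul,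
      bdrySign_mul_self, neg_smul, one_smul, add_neg_cancel]

lemma bdryMap_linkPart_eq_zero {z : TotalChains 𝕜 A}
    (hz : ∀ τ : {s // s ∈ A}, v ∈ τ.1 → bdryMap 𝕜 A z τ = 0) :
    bdryMap 𝕜 (link A {v}) (linkPart A v z) = 0 := by
  funext G
  rw [bdryMap_linkPart, hz _ (Finset.mem_insert_self v G.1), smul_zero, Pi.zero_apply]

/-- The connecting map `H̃_{j+1}(A) → H̃_j(lk_A v)` of the Mayer–Vietoris sequence for
`A = (A ∖ v) ∪ star v` takes `z` to the class of its link part; when that class vanishes,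
`z` is homologous to a chain supported on `A ∖ v`. -/
lemma exists_cone_correction {z : TotalChains 𝕜 A} {j : ℤ}
    (hlk : HomologyVanishes 𝕜 (link A {v}) j) (hz : z ∈ degChains 𝕜 A (j + 1))
    (hbz : ∀ τ : {s // s ∈ A}, v ∈ τ.1 → bdryMap 𝕜 A z τ = 0) :
    ∃ p ∈ degChains 𝕜 (link A {v}) (j + 1),
      ∀ τ : {s // s ∈ A}, v ∈ τ.1 → (z + bdryMap 𝕜 A (cone A v p)) τ = 0 := by
  obtain ⟨p, hp, hbp⟩ := hlk _ (linkPart_mem_degChains hz) (bdryMap_linkPart_eq_zero hbz)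
  exact ⟨p, hp, add_bdryMap_cone_eq_zero hbp⟩

end Link

section MayerVietoris

variable {𝕜 : Type} [Field 𝕜] {V : Type} [DecidableEq V] [Fintype V] {A : Set (Finset V)}

lemma homologyVanishes_of_link_of_deletion (hA : IsComplex A) (v : V) {j : ℤ}
    (hlk : HomologyVanishes 𝕜 (link A {v}) j)
    (hdel : HomologyVanishes 𝕜 (deletion A v) (j + 1)) :
    HomologyVanishes 𝕜 A (j + 1) := by
  intro z hz hbz
  obtain ⟨p, hp, hyv⟩ := exists_cone_correction hlk hz fun τ _ => by rw [hbz, Pi.zero_apply]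
  set y := z + bdryMap 𝕜 A (cone A v p)
  have hy : ∀ τ : {s // s ∈ A}, τ.1 ∉ deletion A v → y τ = 0 :=
    fun τ hτ => hyv τ ((notMem_deletion_iff τ.2).mp hτ)
  have hby : bdryMap 𝕜 A y = 0 := by
    rw [map_add, hbz, bdryMap_bdryMap hA, add_zero]
  have hydeg : y ∈ degChains 𝕜 A (j + 1) :=
    Submodule.add_mem _ hz (bdryMap_mem_degChains (cone_mem_degChains hp))
  obtain ⟨r, hr, hbr⟩ := hdel _ (restrictChain_mem_degChains (deletion_subset A v) hydeg)
    (by rw [bdryMap_restrictChain (deletion_isComplex hA v) _ hy, hby]; rfl)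
  refine ⟨extendByZero _ A r - cone A v p,
    Submodule.sub_mem _ (extendByZero_mem_degChains hr) (cone_mem_degChains hp), ?_⟩
  rw [map_sub, bdryMap_extendByZero (deletion_isComplex hA v) (deletion_subset A v), hbr,
    extendByZero_restrictChain _ hy, add_sub_cancel_right]

lemma homologyVanishes_deletion_of_link (hA : IsComplex A) (v : V) {j : ℤ}
    (hlk : HomologyVanishes 𝕜 (link A {v}) j) (hA' : HomologyVanishes 𝕜 A j) :
    HomologyVanishes 𝕜 (deletion A v) j := by
  intro w hw hbw
  have hdelA := deletion_isComplex hA v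
  have hsub := deletion_subset A v
  obtain ⟨u, hu, hbu⟩ := hA' _ (extendByZero_mem_degChains hw)
    (by rw [bdryMap_extendByZero hdelA hsub, hbw, extendByZero_zero])
  have hbuv : ∀ τ : {s // s ∈ A}, v ∈ τ.1 → bdryMap 𝕜 A u τ = 0 := fun τ hv => by
    rw [hbu, extendByZero, dif_neg ((notMem_deletion_iff τ.2).mpr hv)]
  obtain ⟨p, hp, hu'v⟩ := exists_cone_correction hlk hu hbuv
  set u' := u + bdryMap 𝕜 A (cone A v p)
  have hu' : ∀ τ : {s // s ∈ A}, τ.1 ∉ deletion A v → u' τ = 0 :=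
    fun τ hτ => hu'v τ ((notMem_deletion_iff τ.2).mp hτ)
  refine ⟨restrictChain hsub u', restrictChain_mem_degChains hsub
    (Submodule.add_mem _ hu (bdryMap_mem_degChains (cone_mem_degChains hp))), ?_⟩
  rw [bdryMap_restrictChain hdelA hsub hu', map_add, bdryMap_bdryMap hA, add_zero, hbu,
    restrictChain_extendByZero]

end MayerVietoris

section Induced

variable {V : Type}

def induced (M : Set (Finset V)) (W : Finset V) : Set (Finset V) :=
  {s | s ∈ M ∧ s ⊆ W}

lemma induced_isComplex {M : Set (Finset V)} (hM : IsComplex M) (W : Finset V) :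
    IsComplex (induced M W) :=
  fun _ hs t ht => ⟨hM _ hs.1 t ht, ht.trans hs.2⟩

variable [DecidableEq V]

lemma deletion_induced_insert (M : Set (Finset V)) {W : Finset V} {v : V} (hv : v ∉ W) :
    deletion (induced M (insert v W)) v = induced M W := by
  ext s
  simp only [deletion, induced, Set.mem_ofPred_eq]
  exact ⟨fun ⟨⟨hs, hsW⟩, hvs⟩ => ⟨hs, (Finset.subset_insert_iff_of_notMem hvs).mp hsW⟩,
    fun ⟨hs, hsW⟩ => ⟨⟨hs, hsW.trans (Finset.subset_insert v W)⟩, fun h => hv (hsW h)⟩⟩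

lemma link_induced_link_insert (K : Set (Finset V)) {σ W : Finset V} {v : V} (hv : v ∉ σ) :
    link (induced (link K σ) (insert v W)) {v} = induced (link K (insert v σ)) W := by
  ext τ
  rw [mem_link_singleton]
  simp only [link, induced, Set.mem_ofPred_eq, Finset.disjoint_insert_left,
    Finset.disjoint_insert_right, Finset.insert_union, Finset.union_insert,
    Finset.insert_subset_iff, Finset.mem_insert_self, true_and]
  constructor
  · rintro ⟨hvτ, ⟨⟨-, hστ⟩, hK⟩, hτW⟩
    exact ⟨⟨⟨hvτ, hστ⟩, hK⟩, (Finset.subset_insert_iff_of_notMem hvτ).mp hτW⟩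
  · rintro ⟨⟨⟨hvτ, hστ⟩, hK⟩, hτW⟩
    exact ⟨hvτ, ⟨⟨hv, hστ⟩, hK⟩, hτW.trans (Finset.subset_insert v W)⟩

lemma link_induced_link_eq_empty (K : Set (Finset V)) (W : Finset V) {σ : Finset V} {v : V}
    (hv : v ∈ σ) : link (induced (link K σ) W) {v} = ∅ :=
  Set.eq_empty_of_forall_notMem fun _ hτ =>
    Finset.disjoint_left.mp (mem_link_singleton.mp hτ).2.1.1 hv (Finset.mem_insert_self v _)

lemma induced_link_eq_link (K : Set (Finset V)) {σ W : Finset V} (h : ∀ x, x ∈ W ∨ x ∈ σ) :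
    induced (link K σ) W = link K σ :=
  Set.ext fun _ => ⟨fun hτ => hτ.1, fun hτ => ⟨hτ, fun x hx =>
    (h x).resolve_right fun hxσ => Finset.disjoint_left.mp hτ.1 hxσ hx⟩⟩

end Induced

section Descent

variable {𝕜 : Type} [Field 𝕜] {V : Type} [DecidableEq V] [Fintype V] {K : Set (Finset V)}

lemma exists_insert_not_homologyVanishes_induced (hK : IsComplex K) {σ : Finset V} {j : ℤ}
    (hj : -1 ≤ j) (W : Finset V) (h : ¬ HomologyVanishes 𝕜 (induced (link K σ) W) (j + 1)) :
    ∃ v ∉ σ, ∃ W' : Finset V, ¬ HomologyVanishes 𝕜 (induced (link K (insert v σ)) W') j := by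
  induction W using Finset.induction_on with
  | empty =>
    refine absurd (homologyVanishes_of_forall_card_ne fun s hs => ?_) h
    rw [Finset.subset_empty.mp hs.2, Finset.card_empty]
    omega
  | insert v W hvW ih =>
    have hA := induced_isComplex (link_isComplex hK σ) (insert v W)
    by_cases hlk : HomologyVanishes 𝕜 (link (induced (link K σ) (insert v W)) {v}) j
    · refine ih fun hW => h (homologyVanishes_of_link_of_deletion hA v hlk ?_)
      rwa [deletion_induced_insert _ hvW]
    · have hvσ : v ∉ σ := fun hvσ => hlk <| homologyVanishes_of_forall_card_ne <| by
        simp only [link_induced_link_eq_empty K _ hvσ, Set.mem_empty_iff_false, IsEmpty.forall_iff,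
          implies_true]
      exact ⟨v, hvσ, W, by rwa [link_induced_link_insert K hvσ] at hlk⟩

lemma exists_superset_not_homologyVanishes_link (hK : IsComplex K) {d : ℤ} (ρ W : Finset V)
    (h : ¬ HomologyVanishes 𝕜 (induced (link K ρ) W) d) :
    ∃ τ, ρ ⊆ τ ∧ ¬ HomologyVanishes 𝕜 (link K τ) d := by
  by_cases hcover : ∀ x, x ∈ W ∨ x ∈ ρ
  · exact ⟨ρ, subset_rfl, by rwa [induced_link_eq_link K hcover] at h⟩
  push Not at hcover
  obtain ⟨u, huW, huρ⟩ := hcover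
  have hA := induced_isComplex (link_isComplex hK ρ) (insert u W)
  by_cases hlk : HomologyVanishes 𝕜 (link (induced (link K ρ) (insert u W)) {u}) d
  · refine exists_superset_not_homologyVanishes_link hK ρ (insert u W) fun hA' => h ?_
    rw [← deletion_induced_insert _ huW]
    exact homologyVanishes_deletion_of_link hA u hlk hA'
  · rw [link_induced_link_insert K huρ] at hlk
    obtain ⟨τ, hτ, hτd⟩ := exists_superset_not_homologyVanishes_link hK (insert u ρ) W hlk
    exact ⟨τ, (Finset.subset_insert u ρ).trans hτ, hτd⟩
termination_by (W ∪ ρ)ᶜ.card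
decreasing_by
  all_goals
    refine Finset.card_lt_card (Finset.compl_ssubset_compl.mpr ?_)
    simp only [Finset.insert_union, Finset.union_insert]
    exact Finset.ssubset_insert (by simp [huW, huρ])

lemma exists_card_lt_not_homologyVanishes_link (hK : IsComplex K) {σ : Finset V} {j : ℤ}
    (hj : -1 ≤ j) (h : ¬ HomologyVanishes 𝕜 (link K σ) (j + 1)) :
    ∃ τ : Finset V, σ.card < τ.card ∧ ¬ HomologyVanishes 𝕜 (link K τ) j := by
  rw [← induced_link_eq_link K (W := Finset.univ) fun x => Or.inl (Finset.mem_univ x)] at h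
  obtain ⟨v, hvσ, W, hW⟩ := exists_insert_not_homologyVanishes_induced hK hj _ h
  obtain ⟨τ, hτ, hτj⟩ := exists_superset_not_homologyVanishes_link hK _ W hW
  exact ⟨τ, Finset.card_lt_card ((Finset.ssubset_insert hvσ).trans_subset hτ), hτj⟩

lemma exists_card_add_le_not_homologyVanishes_link (hK : IsComplex K) {j : ℤ} (hj : -1 ≤ j)
    (k : ℕ) {σ : Finset V} (h : ¬ HomologyVanishes 𝕜 (link K σ) (j + k)) :
    ∃ τ : Finset V, σ.card + k ≤ τ.card ∧ ¬ HomologyVanishes 𝕜 (link K τ) j := by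
  induction k generalizing σ with
  | zero => exact ⟨σ, le_rfl, by simpa using h⟩
  | succ k ih =>
    obtain ⟨τ₀, hστ₀, h₀⟩ := exists_card_lt_not_homologyVanishes_link hK (j := j + k)
      (by omega) (by rwa [Nat.cast_succ, ← add_assoc] at h)
    obtain ⟨τ, hτ, hτj⟩ := ih h₀
    exact ⟨τ, by omega, hτj⟩

lemma mem_of_not_homologyVanishes_link (hK : IsComplex K) {τ : Finset V} {i : ℤ}
    (h : ¬ HomologyVanishes 𝕜 (link K τ) i) : τ ∈ K := by
  obtain ⟨s, hs, -⟩ := exists_card_eq_of_not_homologyVanishes h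
  exact hK _ hs.2 _ Finset.subset_union_left

end Descent

theorem homology_degree_antitone_of_isPR_general (𝕜 : Type) [Field 𝕜] {V : Type} [DecidableEq V]
    [Fintype V] (K : Set (Finset V)) (hK : IsComplex K) (hPR : IsPR 𝕜 K)
    (σ₁ σ₂ : Finset V) (h₁ : σ₁ ∈ K) (i₁ i₂ : ℤ)
    (hh₁ : Nontrivial (redHomology 𝕜 (link K σ₁) i₁))
    (hh₂ : Nontrivial (redHomology 𝕜 (link K σ₂) i₂))
    (hcard : σ₁.card < σ₂.card) : i₂ < i₁ := by
  have hi₁ : -1 ≤ i₁ := by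
    obtain ⟨s, -, hs⟩ := exists_card_eq_of_not_homologyVanishes (nontrivial_redHomology_iff.mp hh₁)
    omega
  by_contra! hle
  have hσ₂ : ¬ HomologyVanishes 𝕜 (link K σ₂) (i₁ + (i₂ - i₁).toNat) := by
    rwa [Int.toNat_of_nonneg (by omega), add_sub_cancel, ← nontrivial_redHomology_iff]
  obtain ⟨τ, hτ, hτi₁⟩ := exists_card_add_le_not_homologyVanishes_link hK hi₁ _ hσ₂
  have := hPR i₁ hi₁ σ₁ h₁ τ (mem_of_not_homologyVanishes_link hK hτi₁) hh₁
    (nontrivial_redHomology_iff.mpr hτi₁)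
  omega

/-- **Homology degrees decrease as face size increases in a PR complex.** If `Δ` is PR
and `σ₁, σ₂` are faces whose links have nontrivial reduced homology in degrees `i₁`
and `i₂` respectively, then `|σ₁| < |σ₂|` implies `i₁ > i₂`. -/
theorem homology_degree_antitone_of_isPR (𝕜 : Type) [Field 𝕜] {V : Type} [DecidableEq V]
    [Fintype V] (K : Set (Finset V)) (hK : IsComplex K) (hPR : IsPR 𝕜 K)
    (σ₁ σ₂ : Finset V) (h₁ : σ₁ ∈ K) (h₂ : σ₂ ∈ K) (i₁ i₂ : ℤ)
    (hh₁ : Nontrivial (redHomology 𝕜 (link K σ₁) i₁))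
    (hh₂ : Nontrivial (redHomology 𝕜 (link K σ₂) i₂))
    (hcard : σ₁.card < σ₂.card) : i₂ < i₁ :=
  homology_degree_antitone_of_isPR_general 𝕜 K hK hPR σ₁ σ₂ h₁ i₁ i₂ hh₁ hh₂ hcard
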